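/- arXiv:math/0609331 — 3 statements merged into one kernel-verified Lean document; each statement's English description precedes it below -/
import Mathlib

section
/- In Setting (LS), assume in addition that the family G is continuous in (ε,a,b) ∈ V as a map into the space of bounded linear operators from X₂ to B₁ (operator norm), that each G(ε,a,b) is a right inverse of Id − S(ε,a,b) on X₂ where S(ε,a,b) are bounded linear operators on B₁ preserving X₁, and that R : V → ℝ and N₁ : V → ℝ are continuous with: R(0,0,0) = 1, ε ↦ R(ε,0,0) differentiable at ε = 0 with ∂_ε R(0,0,0) ≠ 0, |R(ε,a,b) − R(ε,0,0)| ≤ C(|a| + ‖b‖_{X₁}), R and N₁ Lipschitz in (a,b) (b-increments measured in ‖·‖_{B₁}) with |N₁(ε,a,b)| ≤ C(|a| + ‖b‖_{X₁})² and Lipschitz constants of N₁ bounded by C(|a| + |a'| + ‖b‖_{X₁} + ‖b'‖_{X₁}). Define f(ε,a,b) := (R(ε,a,b) − 1)a + N₁(ε,a,b) and g(ε,a,b) := (S(ε,a,b) − Id)b + N₂(ε,a,b), and let ω̄ be a continuous X₁-valued curve with ω̄(0) = 0 and ω̄(a) ∈ ker(Id − S(ε,a,b)) ∩ X₁ for all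 small ε, b, with ‖ω̄(a)‖_{X₁} ≤ κ|a|. Then there exists a map a ↦ ε(a), defined on a neighborhood of 0 in ℝ, with ε(0) = 0 and ε continuous at a = 0, such that f and g both vanish at (ε(a), a, B(ε(a), a, ω̄(a))), where B is the fixed-point map of the Lyapunov–Schmidt reduction. -/
open Filter Topology

set_option maxHeartbeats 2000000

/-- Brouwer-based bifurcation in Setting (LS): under continuity (rather than Lipschitz
regularity in `(ε,a)`) of the right inverse `G` and of `R`, `N₁`, and given a continuous
kernel curve `ω̄` with `‖ω̄(a)‖_{X₁} ≤ κ|a|`, there is a map `a ↦ ε(a)`, defined near `0`,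
with `ε(0) = 0` and `ε` continuous at `0`, such that
`f(ε,a,b) = (R(ε,a,b) − 1)a + N₁(ε,a,b)` and `g(ε,a,b) = (S(ε,a,b) − Id)b + N₂(ε,a,b)`
both vanish at `b = Bmap(ε(a), a, ω̄(a))`. -/
theorem stmt6
    {B₁ : Type*} [NormedAddCommGroup B₁] [NormedSpace ℝ B₁] [CompleteSpace B₁]
    (X₁ X₂ B₂ : Submodule ℝ B₁)
    (nX1 nX2 nB2 : B₁ → ℝ)
    (hX21 : X₂ ≤ X₁) (hX2B2 : X₂ ≤ B₂)
    (hB1X1 : ∀ b : B₁, ‖b‖ ≤ nX1 b) (hX1X2 : ∀ b : B₁, nX1 b ≤ nX2 b)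
    (hB1B2 : ∀ b : B₁, ‖b‖ ≤ nB2 b) (hB2X2 : ∀ b : B₁, nB2 b ≤ nX2 b)
    (hball : IsClosed {b : B₁ | b ∈ X₁ ∧ nX1 b ≤ 1})
    (ρ C : ℝ) (hρ : 0 < ρ) (hC : 0 < C)
    (N₂ : ℝ → ℝ → B₁ → B₁)
    (S : ℝ → ℝ → B₁ → B₁ →L[ℝ] B₁)
    (G : ℝ → ℝ → B₁ → B₁ →ₗ[ℝ] B₁)
    -- nonlinear term N₂
    (hN₂mem : ∀ ε a b, b ∈ X₁ → |ε| + |a| + nX1 b < ρ → N₂ ε a b ∈ X₂)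
    (hN₂bd : ∀ ε a b, b ∈ X₁ → |ε| + |a| + nX1 b < ρ →
        nX2 (N₂ ε a b) ≤ C * (|a| + nX1 b) ^ 2)
    (hN₂lip : ∀ ε a a' b b', b ∈ X₁ → b' ∈ X₁ →
        |ε| + |a| + nX1 b < ρ → |ε| + |a'| + nX1 b' < ρ →
        nB2 (N₂ ε a b - N₂ ε a' b')
          ≤ C * (|a| + |a'| + nX1 b + nX1 b') * (|a - a'| + ‖b - b'‖))
    (hN₂lipε : ∀ ε ε' a b, b ∈ X₁ →
        |ε| + |a| + nX1 b < ρ → |ε'| + |a| + nX1 b < ρ →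
        nB2 (N₂ ε a b - N₂ ε' a b) ≤ C * (|a| + nX1 b) ^ 2 * |ε - ε'|)
    -- the transverse operator S and its right inverse G
    (hSX1 : ∀ ε a b, b ∈ X₁ → |ε| + |a| + nX1 b < ρ → ∀ u ∈ X₁, S ε a b u ∈ X₁)
    (hGright : ∀ ε a b, b ∈ X₁ → |ε| + |a| + nX1 b < ρ → ∀ z ∈ X₂,
        G ε a b z - S ε a b (G ε a b z) = z)
    (hGmem : ∀ ε a b, b ∈ X₁ → |ε| + |a| + nX1 b < ρ →
        ∀ z ∈ X₂, G ε a b z ∈ X₁)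
    (hGX : ∀ ε a b, b ∈ X₁ → |ε| + |a| + nX1 b < ρ →
        ∀ z ∈ X₂, nX1 (G ε a b z) ≤ C * nX2 z)
    (hGB : ∀ ε a b, b ∈ X₁ → |ε| + |a| + nX1 b < ρ →
        ∀ z ∈ X₂, ‖G ε a b z‖ ≤ C * nB2 z)
    (hGlipb : ∀ ε a b b', b ∈ X₁ → b' ∈ X₁ →
        |ε| + |a| + nX1 b < ρ → |ε| + |a| + nX1 b' < ρ → ∀ z ∈ X₂,
        ‖G ε a b z - G ε a b' z‖ ≤ C * ‖b - b'‖ * nB2 z)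
    -- continuity of G in (ε,a,b) in ℒ(X₂,B₁) operator norm
    (hGcont : ∀ ε a b, b ∈ X₁ → |ε| + |a| + nX1 b < ρ → ∀ η > (0 : ℝ), ∃ ζ > (0 : ℝ),
        ∀ ε' a' b', b' ∈ X₁ → |ε'| + |a'| + nX1 b' < ρ →
          |ε - ε'| + |a - a'| + nX1 (b - b') < ζ → ∀ z ∈ X₂,
          ‖G ε a b z - G ε' a' b' z‖ ≤ η * nX2 z)
    -- the primary linearized term R, continuous, with derivative condition
    (R : ℝ → ℝ → B₁ → ℝ)
    (hRcont : ContinuousOn (fun p : ℝ × ℝ × B₁ => R p.1 p.2.1 p.2.2)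
        {p : ℝ × ℝ × B₁ | p.2.2 ∈ X₁ ∧ |p.1| + |p.2.1| + nX1 p.2.2 < ρ})
    (hR000 : R 0 0 0 = 1)
    (γ : ℝ) (hγ : γ ≠ 0)
    (hRderiv : HasDerivAt (fun ε => R ε 0 0) γ 0)
    (hRbd : ∀ ε a b, b ∈ X₁ → |ε| + |a| + nX1 b < ρ →
        |R ε a b - R ε 0 0| ≤ C * (|a| + nX1 b))
    (hRlip : ∀ ε a a' b b', b ∈ X₁ → b' ∈ X₁ →
        |ε| + |a| + nX1 b < ρ → |ε| + |a'| + nX1 b' < ρ →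
        |R ε a b - R ε a' b'| ≤ C * (|a - a'| + ‖b - b'‖))
    -- the nonlinear term N₁, continuous
    (N₁ : ℝ → ℝ → B₁ → ℝ)
    (hN₁cont : ContinuousOn (fun p : ℝ × ℝ × B₁ => N₁ p.1 p.2.1 p.2.2)
        {p : ℝ × ℝ × B₁ | p.2.2 ∈ X₁ ∧ |p.1| + |p.2.1| + nX1 p.2.2 < ρ})
    (hN₁bd : ∀ ε a b, b ∈ X₁ → |ε| + |a| + nX1 b < ρ →
        |N₁ ε a b| ≤ C * (|a| + nX1 b) ^ 2)
    (hN₁lip : ∀ ε a a' b b', b ∈ X₁ → b' ∈ X₁ →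
        |ε| + |a| + nX1 b < ρ → |ε| + |a'| + nX1 b' < ρ →
        |N₁ ε a b - N₁ ε a' b'|
          ≤ C * (|a| + |a'| + nX1 b + nX1 b') * (|a - a'| + ‖b - b'‖))
    -- the continuous kernel curve ω̄
    (ωbar : ℝ → B₁) (κ : ℝ)
    (hωmem : ∀ a : ℝ, ωbar a ∈ X₁)
    (hω0 : ωbar 0 = 0)
    (hωcont : ∀ a : ℝ, ∀ η > (0 : ℝ), ∃ ζ > (0 : ℝ), ∀ a' : ℝ,
        |a - a'| < ζ → nX1 (ωbar a - ωbar a') ≤ η)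
    (hωbd : ∀ a : ℝ, nX1 (ωbar a) ≤ κ * |a|)
    (hωker : ∀ ε a b, b ∈ X₁ → |ε| + |a| + nX1 b < ρ → S ε a b (ωbar a) = ωbar a)
    -- the fixed-point map Bmap of the Lyapunov–Schmidt reduction
    (δB C' : ℝ) (hδB : 0 < δB) (hC' : 0 < C')
    (Bmap : ℝ → ℝ → B₁ → B₁)
    (hBmem : ∀ ε a ω, ω ∈ X₁ → |ε| + |a| + nX1 ω < δB → Bmap ε a ω ∈ X₁)
    (hBfix : ∀ ε a ω, ω ∈ X₁ → |ε| + |a| + nX1 ω < δB →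
        Bmap ε a ω = ω + G ε a (Bmap ε a ω) (N₂ ε a (Bmap ε a ω)))
    (hB00 : ∀ ε, |ε| < δB → Bmap ε 0 0 = 0)
    (hBbd1 : ∀ ε a ω, ω ∈ X₁ → |ε| + |a| + nX1 ω < δB →
        ‖Bmap ε a ω‖ ≤ C' * (‖ω‖ + |a| ^ 2))
    (hBbd2 : ∀ ε a ω, ω ∈ X₁ → |ε| + |a| + nX1 ω < δB →
        nX1 (Bmap ε a ω) ≤ C' * (nX1 ω + |a| ^ 2))
    (hBcont : ContinuousOn (fun p : ℝ × ℝ × B₁ => Bmap p.1 p.2.1 p.2.2)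
        {p : ℝ × ℝ × B₁ | p.2.2 ∈ X₁ ∧ |p.1| + |p.2.1| + nX1 p.2.2 < δB}) :
    ∃ r > (0 : ℝ), ∃ εf : ℝ → ℝ,
      εf 0 = 0 ∧
      (∀ η > (0 : ℝ), ∃ ζ > (0 : ℝ), ∀ a : ℝ, |a| < ζ → |εf a| < η) ∧
      (∀ a : ℝ, |a| < r →
        (R (εf a) a (Bmap (εf a) a (ωbar a)) - 1) * a
            + N₁ (εf a) a (Bmap (εf a) a (ωbar a)) = 0 ∧
        S (εf a) a (Bmap (εf a) a (ωbar a)) (Bmap (εf a) a (ωbar a))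
            - Bmap (εf a) a (ωbar a)
            + N₂ (εf a) a (Bmap (εf a) a (ωbar a)) = 0) := by
  
  classical
  -- basic positivity facts
  have hnn : ∀ x : B₁, 0 ≤ nX1 x := fun x => (norm_nonneg x).trans (hB1X1 x)
  have hκ0 : 0 ≤ κ := by
    have h := hωbd 1
    have h2 := hnn (ωbar 1)
    simp only [abs_one, mul_one] at h
    linarith
  have hγpos : 0 < |γ| := abs_pos.mpr hγ
  have hX10 : nX1 (0 : B₁) = 0 := by
    have h := hωbd 0
    rw [hω0] at h
    simp only [abs_zero, mul_zero] at h
    exact le_antisymm h (hnn 0)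
  -- derivative: local linear approximation of R ε 0 0
  obtain ⟨δ₁, hδ₁pos, hδ₁⟩ :
      ∃ δ₁ > (0 : ℝ), ∀ ε : ℝ, |ε| < δ₁ → |R ε 0 0 - 1 - ε * γ| ≤ |γ| / 2 * |ε| := by
    have h := (hasDerivAt_iff_isLittleO.mp hRderiv).def (by positivity : (0:ℝ) < |γ| / 2)
    rw [Metric.eventually_nhds_iff] at h
    obtain ⟨d, hd, hh⟩ := h
    refine ⟨d, hd, fun ε hε => ?_⟩
    have := hh (show dist ε 0 < d by simpa [Real.dist_eq] using hε)
    simpa [hR000, smul_eq_mul, Real.norm_eq_abs, mul_comm] using this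
  -- constants
  set K₁ : ℝ := C' * (κ + 1) with hK₁def
  have hK₁pos : 0 < K₁ := mul_pos hC' (by linarith)
  set K₂ : ℝ := C * (1 + K₁) + C * (1 + K₁) ^ 2 with hK₂def
  have hK₂pos : 0 < K₂ := by nlinarith
  set L : ℝ := 2 * K₂ / |γ| + 1 with hLdef
  have hLpos : 0 < L := by positivity
  have hγL : |γ| * L = 2 * K₂ + |γ| := by
    rw [hLdef]; field_simp
  set r : ℝ := min 1 (min (δ₁ / L) (min (δB / (L + 1 + κ)) (ρ / (L + 1 + K₁)))) with hrdef
  have hLκ : (0:ℝ) < L + 1 + κ := by linarith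
  have hLK : (0:ℝ) < L + 1 + K₁ := by linarith
  have hrpos : 0 < r := by
    refine lt_min one_pos (lt_min (div_pos hδ₁pos hLpos)
      (lt_min (div_pos hδB hLκ) (div_pos hρ hLK)))
  have hr1 : r ≤ 1 := min_le_left _ _
  have hrδ₁ : r * L ≤ δ₁ := by
    have h : r ≤ δ₁ / L := le_trans (min_le_right _ _) (min_le_left _ _)
    exact (le_div_iff₀ hLpos).mp h
  have hrδB : r * (L + 1 + κ) ≤ δB := by
    have h : r ≤ δB / (L + 1 + κ) :=
      le_trans (min_le_right _ _) (le_trans (min_le_right _ _) (min_le_left _ _))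
    exact (le_div_iff₀ hLκ).mp h
  have hrρ : r * (L + 1 + K₁) ≤ ρ := by
    have h : r ≤ ρ / (L + 1 + K₁) :=
      le_trans (min_le_right _ _) (le_trans (min_le_right _ _) (min_le_right _ _))
    exact (le_div_iff₀ hLK).mp h
  clear_value K₁ K₂ L r
  -- key domain facts
  have key : ∀ a : ℝ, |a| < r → ∀ ε : ℝ, |ε| ≤ L * |a| →
      Bmap ε a (ωbar a) ∈ X₁ ∧ nX1 (Bmap ε a (ωbar a)) ≤ K₁ * |a| ∧
      |ε| + |a| + nX1 (ωbar a) < δB ∧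
      |ε| + |a| + nX1 (Bmap ε a (ωbar a)) < ρ ∧ |ε| < δ₁ := by
    intro a ha ε hε
    have haa : |a| ≤ 1 := le_of_lt (lt_of_lt_of_le ha hr1)
    have ha0 : 0 ≤ |a| := abs_nonneg a
    have hω : nX1 (ωbar a) ≤ κ * |a| := hωbd a
    have hεδ₁ : |ε| < δ₁ := by
      have h1 : L * |a| < L * r := mul_lt_mul_of_pos_left ha hLpos
      have h2 : L * r = r * L := by ring
      linarith
    have hδ : |ε| + |a| + nX1 (ωbar a) < δB := by
      have h3 : (L + 1 + κ) * |a| < (L + 1 + κ) * r := mul_lt_mul_of_pos_left ha hLκ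
      have h4 : (L + 1 + κ) * |a| = L * |a| + |a| + κ * |a| := by ring
      have h5 : (L + 1 + κ) * r = r * (L + 1 + κ) := by ring
      linarith
    have hBmem' := hBmem ε a (ωbar a) (hωmem a) hδ
    have hBb := hBbd2 ε a (ωbar a) (hωmem a) hδ
    have hsq : |a| ^ 2 ≤ |a| := by nlinarith
    have hb : nX1 (Bmap ε a (ωbar a)) ≤ K₁ * |a| := by
      have h6 : C' * (nX1 (ωbar a) + |a| ^ 2) ≤ C' * (κ * |a| + |a|) := by
        apply mul_le_mul_of_nonneg_left _ hC'.le
        linarith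
      have h7 : C' * (κ * |a| + |a|) = K₁ * |a| := by rw [hK₁def]; ring
      linarith
    have hρ' : |ε| + |a| + nX1 (Bmap ε a (ωbar a)) < ρ := by
      have h3 : (L + 1 + K₁) * |a| < (L + 1 + K₁) * r := mul_lt_mul_of_pos_left ha hLK
      have h4 : (L + 1 + K₁) * |a| = L * |a| + |a| + K₁ * |a| := by ring
      have h5 : (L + 1 + K₁) * r = r * (L + 1 + K₁) := by ring
      linarith
    exact ⟨hBmem', hb, hδ, hρ', hεδ₁⟩
  -- g vanishes at the fixed point
  have gzero : ∀ a : ℝ, |a| < r → ∀ ε : ℝ, |ε| ≤ L * |a| →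
      S ε a (Bmap ε a (ωbar a)) (Bmap ε a (ωbar a)) - Bmap ε a (ωbar a)
        + N₂ ε a (Bmap ε a (ωbar a)) = 0 := by
    intro a ha ε hε
    obtain ⟨hmem, hb, hδ, hρ', -⟩ := key a ha ε hε
    set bb := Bmap ε a (ωbar a) with hbb
    set z := N₂ ε a bb with hz
    have hfix : bb = ωbar a + G ε a bb z := hBfix ε a (ωbar a) (hωmem a) hδ
    have hzX : z ∈ X₂ := hN₂mem ε a bb hmem hρ'
    have hright : G ε a bb z - S ε a bb (G ε a bb z) = z := hGright ε a bb hmem hρ' z hzX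
    have hker : S ε a bb (ωbar a) = ωbar a := hωker ε a bb hmem hρ'
    have e2 : ∀ u z' : B₁, u - S ε a bb u = z' → S ε a bb u = u - z' := by
      intro u z' h
      rw [← h, sub_sub_cancel]
    have e2' : S ε a bb (G ε a bb z) = G ε a bb z - z := e2 _ _ hright
    calc S ε a bb bb - bb + z
        = S ε a bb (ωbar a + G ε a bb z) - bb + z := by
          rw [show S ε a bb bb = S ε a bb (ωbar a + G ε a bb z) from congrArg _ hfix]
      _ = (ωbar a + S ε a bb (G ε a bb z)) - bb + z := by rw [map_add, hker]
      _ = (ωbar a + (G ε a bb z - z)) - bb + z := by rw [e2']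
      _ = (ωbar a + G ε a bb z) - bb := by abel
      _ = bb - bb := by rw [← hfix]
      _ = 0 := sub_self _
  -- the quantitative estimate on f along the fixed point
  have est : ∀ a : ℝ, |a| < r → ∀ ε : ℝ, |ε| ≤ L * |a| →
      |((R ε a (Bmap ε a (ωbar a)) - 1) * a + N₁ ε a (Bmap ε a (ωbar a))) - γ * ε * a|
        ≤ |γ| / 2 * |ε| * |a| + K₂ * |a| ^ 2 := by
    intro a ha ε hε
    obtain ⟨hmem, hb, hδ, hρ', hεδ₁⟩ := key a ha ε hε
    set bb := Bmap ε a (ωbar a) with hbb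
    have h1 : |R ε 0 0 - 1 - ε * γ| ≤ |γ| / 2 * |ε| := hδ₁ ε hεδ₁
    have h2 : |R ε a bb - R ε 0 0| ≤ C * (|a| + nX1 bb) := hRbd ε a bb hmem hρ'
    have h3 : |N₁ ε a bb| ≤ C * (|a| + nX1 bb) ^ 2 := hN₁bd ε a bb hmem hρ'
    have hnb : 0 ≤ nX1 bb := hnn bb
    have ha0 : 0 ≤ |a| := abs_nonneg a
    have p1 : |(R ε 0 0 - 1 - ε * γ) * a| ≤ |γ| / 2 * |ε| * |a| := by
      rw [abs_mul]
      exact mul_le_mul_of_nonneg_right h1 ha0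
    have hsum : |a| + nX1 bb ≤ (1 + K₁) * |a| := by
      have hx : (1 + K₁) * |a| = |a| + K₁ * |a| := by ring
      linarith
    have p2 : |(R ε a bb - R ε 0 0) * a| ≤ C * (1 + K₁) * |a| ^ 2 := by
      rw [abs_mul]
      have h5 : |R ε a bb - R ε 0 0| ≤ C * ((1 + K₁) * |a|) := by
        refine le_trans h2 (mul_le_mul_of_nonneg_left hsum hC.le)
      calc |R ε a bb - R ε 0 0| * |a| ≤ (C * ((1 + K₁) * |a|)) * |a| :=
            mul_le_mul_of_nonneg_right h5 ha0
        _ = C * (1 + K₁) * |a| ^ 2 := by ring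
    have p3 : |N₁ ε a bb| ≤ C * (1 + K₁) ^ 2 * |a| ^ 2 := by
      refine le_trans h3 ?_
      have h6 : (|a| + nX1 bb) ^ 2 ≤ ((1 + K₁) * |a|) ^ 2 := by nlinarith
      have h7 : C * (|a| + nX1 bb) ^ 2 ≤ C * ((1 + K₁) * |a|) ^ 2 :=
        mul_le_mul_of_nonneg_left h6 hC.le
      calc C * (|a| + nX1 bb) ^ 2 ≤ C * ((1 + K₁) * |a|) ^ 2 := h7
        _ = C * (1 + K₁) ^ 2 * |a| ^ 2 := by ring
    have heq : (R ε a bb - 1) * a + N₁ ε a bb - γ * ε * a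
        = (R ε 0 0 - 1 - ε * γ) * a + (R ε a bb - R ε 0 0) * a + N₁ ε a bb := by ring
    rw [heq]
    have habs := abs_add_three ((R ε 0 0 - 1 - ε * γ) * a) ((R ε a bb - R ε 0 0) * a)
      (N₁ ε a bb)
    have hK2 : K₂ * |a| ^ 2 = C * (1 + K₁) * |a| ^ 2 + C * (1 + K₁) ^ 2 * |a| ^ 2 := by
      rw [hK₂def]; ring
    linarith
  -- existence of a root for each small nonzero a, via the intermediate value theorem
  have Hex : ∀ a : ℝ, a ≠ 0 → |a| < r → ∃ ε : ℝ, |ε| ≤ L * |a| ∧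
      (R ε a (Bmap ε a (ωbar a)) - 1) * a + N₁ ε a (Bmap ε a (ωbar a)) = 0 := by
    intro a ha0 har
    have hapos : 0 < |a| := abs_pos.mpr ha0
    have hMpos : 0 < L * |a| := mul_pos hLpos hapos
    set I : Set ℝ := Set.Icc (-(L * |a|)) (L * |a|) with hIdef
    have hIsub : ∀ ε ∈ I, |ε| ≤ L * |a| := fun ε hε => abs_le.mpr ⟨hε.1, hε.2⟩
    -- continuity of the fixed point in ε
    have hBc : ContinuousOn (fun ε => Bmap ε a (ωbar a)) I := by
      have hmaps : Set.MapsTo (fun ε : ℝ => (ε, a, ωbar a)) I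
          {p : ℝ × ℝ × B₁ | p.2.2 ∈ X₁ ∧ |p.1| + |p.2.1| + nX1 p.2.2 < δB} :=
        fun ε hε => ⟨hωmem a, (key a har ε (hIsub ε hε)).2.2.1⟩
      exact hBcont.comp
        ((continuous_id.prodMk (continuous_const.prodMk continuous_const)).continuousOn)
        hmaps
    have htriple : ContinuousOn (fun ε : ℝ => (ε, a, Bmap ε a (ωbar a))) I :=
      continuousOn_id.prodMk (continuousOn_const.prodMk hBc)
    have hmaps2 : Set.MapsTo (fun ε : ℝ => (ε, a, Bmap ε a (ωbar a))) I
        {p : ℝ × ℝ × B₁ | p.2.2 ∈ X₁ ∧ |p.1| + |p.2.1| + nX1 p.2.2 < ρ} :=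
      fun ε hε => ⟨(key a har ε (hIsub ε hε)).1, (key a har ε (hIsub ε hε)).2.2.2.1⟩
    have hRc : ContinuousOn (fun ε => R ε a (Bmap ε a (ωbar a))) I :=
      hRcont.comp htriple hmaps2
    have hN₁c : ContinuousOn (fun ε => N₁ ε a (Bmap ε a (ωbar a))) I :=
      hN₁cont.comp htriple hmaps2
    have hψc : ContinuousOn
        (fun ε => (R ε a (Bmap ε a (ωbar a)) - 1) * a + N₁ ε a (Bmap ε a (ωbar a))) I :=
      ((hRc.sub continuousOn_const).mul continuousOn_const).add hN₁c
    -- endpoints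
    set e : ℝ := if 0 ≤ γ * a then L * |a| else -(L * |a|) with hedef
    have he1 : |e| = L * |a| := by
      rw [hedef]; split <;> simp [abs_of_pos hMpos]
    have he1' : |e| ≤ L * |a| := le_of_eq he1
    have he1'' : |(-e)| ≤ L * |a| := by rw [abs_neg]; exact he1'
    have hγa : γ * a ≠ 0 := mul_ne_zero hγ ha0
    have he2 : γ * e * a = |γ| * (L * |a| * |a|) := by
      rw [hedef]
      by_cases h : 0 ≤ γ * a
      · rw [if_pos h]
        have : γ * a = |γ| * |a| := by rw [← abs_mul, abs_of_nonneg h]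
        nlinarith [this]
      · rw [if_neg h]
        push_neg at h
        have : γ * a = -(|γ| * |a|) := by
          rw [← abs_mul, abs_of_neg h]; ring
        nlinarith [this]
    have hγL2 : |γ| * L * |a| ^ 2 = (2 * K₂ + |γ|) * |a| ^ 2 := by rw [hγL]
    have hposgam : 0 < |γ| * |a| ^ 2 := mul_pos hγpos (pow_pos hapos 2)
    have hube := est a har e he1'
    have hubne := est a har (-e) he1''
    rw [he1] at hube
    rw [abs_neg, he1] at hubne
    clear_value e
    have hψe : 0 < (R e a (Bmap e a (ωbar a)) - 1) * a + N₁ e a (Bmap e a (ωbar a)) := by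
      have h := (abs_le.mp hube).1
      linarith only [h, he2, hγL2, hposgam]
    have hψne : (R (-e) a (Bmap (-e) a (ωbar a)) - 1) * a
        + N₁ (-e) a (Bmap (-e) a (ωbar a)) < 0 := by
      have h := (abs_le.mp hubne).2
      have he2' : γ * (-e) * a = -(|γ| * (L * |a| * |a|)) := by rw [← he2]; ring
      linarith only [h, he2', hγL2, hposgam]
    -- intermediate value theorem on uIcc (-e) e
    have hsub : Set.uIcc (-e) e ⊆ I := by
      have hee := abs_le.mp he1'
      have hee' : -(L * |a|) ≤ -e ∧ -e ≤ L * |a| := by constructor <;> linarith [hee.1, hee.2]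
      exact Set.uIcc_subset_Icc ⟨hee'.1, hee'.2⟩ ⟨hee.1, hee.2⟩
    have hcont' := hψc.mono hsub
    have h0mem : (0 : ℝ) ∈ Set.uIcc
        ((R (-e) a (Bmap (-e) a (ωbar a)) - 1) * a + N₁ (-e) a (Bmap (-e) a (ωbar a)))
        ((R e a (Bmap e a (ωbar a)) - 1) * a + N₁ e a (Bmap e a (ωbar a))) :=
      Set.mem_uIcc.mpr (Or.inl ⟨hψne.le, hψe.le⟩)
    obtain ⟨ε₀, hε₀I, hε₀⟩ := intermediate_value_uIcc hcont' h0mem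
    have hε₀I' := hsub hε₀I
    exact ⟨ε₀, abs_le.mpr ⟨hε₀I'.1, hε₀I'.2⟩, hε₀⟩
  -- define εf and conclude
  refine ⟨r, hrpos, fun a => if h : a ≠ 0 ∧ |a| < r then (Hex a h.1 h.2).choose else 0,
    ?_, ?_, ?_⟩
  · simp
  · intro η hη
    have hL1 : (0:ℝ) < L + 1 := by linarith
    refine ⟨η / (L + 1), div_pos hη hL1, fun a ha => ?_⟩
    by_cases h : a ≠ 0 ∧ |a| < r
    · beta_reduce
      rw [dif_pos h]
      have hspec := (Hex a h.1 h.2).choose_spec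
      have h1 : |(Hex a h.1 h.2).choose| ≤ L * |a| := hspec.1
      have h2 : L * |a| < L * (η / (L + 1)) := mul_lt_mul_of_pos_left ha hLpos
      have h3 : L * (η / (L + 1)) < η := by
        rw [mul_div_assoc'] at *
        rw [div_lt_iff₀ hL1]
        nlinarith
      linarith
    · beta_reduce
      rw [dif_neg h]
      simpa using hη
  · intro a ha
    by_cases h0 : a = 0
    · subst h0
      beta_reduce
      rw [dif_neg (by simp)]
      rw [hω0]
      have hB0 : Bmap 0 0 0 = 0 := hB00 0 (by simpa using hδB)
      rw [hB0]
      have hdom : |(0:ℝ)| + |(0:ℝ)| + nX1 (0:B₁) < ρ := by simp [hX10, hρ]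
      constructor
      · have h := hN₁bd 0 0 0 X₁.zero_mem hdom
        simp only [abs_zero, hX10, add_zero, zero_add, mul_zero] at h
        have hN1 : N₁ 0 0 0 = 0 := by
          have := abs_nonneg (N₁ 0 0 0)
          have h' : |N₁ 0 0 0| = 0 := le_antisymm (by nlinarith) this
          exact abs_eq_zero.mp h'
        simp [hN1]
      · have h := hN₂bd 0 0 0 X₁.zero_mem hdom
        simp only [abs_zero, hX10, add_zero, zero_add] at h
        have hN2 : N₂ 0 0 0 = 0 := by
          have h1 : ‖N₂ 0 0 0‖ ≤ nX2 (N₂ 0 0 0) := (hB1X1 _).trans (hX1X2 _)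
          have h2 : ‖N₂ 0 0 0‖ ≤ 0 := by nlinarith
          exact norm_le_zero_iff.mp h2
        simp [hN2]
    · beta_reduce
      rw [dif_pos (⟨h0, ha⟩ : a ≠ 0 ∧ |a| < r)]
      obtain ⟨hle, heq⟩ := (Hex a h0 ha).choose_spec
      exact ⟨heq, gzero a ha _ hle⟩
end

section
/- Fix a ∈ ℝ with a < 0, M > 0 and T₀ > 0. There exists C > 0 such that for all z ∈ ℝ, ∫_{T₀}^{+∞} t^{−1/2} exp(−(z − a t)² / (M t)) dt ≤ C. -/
open MeasureTheory

/-- Uniform-in-`z` bound on the time integral of a moving Gaussian with noncharacteristic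
speed `a < 0`: `∫_{T₀}^∞ t^{-1/2} exp(−(z−at)²/(Mt)) dt ≤ C`. -/
theorem stmt10 (a M T₀ : ℝ) (ha : a < 0) (hM : 0 < M) (hT₀ : 0 < T₀) :
    ∃ C > (0 : ℝ), ∀ z : ℝ,
      (∫ t in Set.Ioi T₀, t ^ (-(1 : ℝ) / 2) * Real.exp (-(z - a * t) ^ 2 / (M * t))) ≤ C := by
  set b : ℝ := -a with hbdef
  have hb : 0 < b := by simp only [hbdef]; linarith
  have hc : 0 < b ^ 2 / M := by positivity
  set c : ℝ := b ^ 2 / M with hcdef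
  refine ⟨2 * Real.sqrt (Real.pi / c), by positivity, fun z => ?_⟩
  set s₀ : ℝ := Real.sqrt (max 0 (-z) / b) with hs₀def
  have hs₀ : 0 ≤ s₀ := Real.sqrt_nonneg _
  have hs₀sq : b * s₀ ^ 2 = max 0 (-z) := by
    rw [hs₀def, Real.sq_sqrt (by positivity)]
    field_simp
  have hT₀' : 0 < Real.sqrt T₀ := Real.sqrt_pos.mpr hT₀
  have himage : (fun s : ℝ => s ^ 2) '' Set.Ioi (Real.sqrt T₀) = Set.Ioi T₀ := by
    ext t
    constructor
    · rintro ⟨s, hs, rfl⟩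
      simp only [Set.mem_Ioi] at hs ⊢
      nlinarith [Real.sq_sqrt hT₀.le, Real.sqrt_nonneg T₀]
    · intro ht
      simp only [Set.mem_Ioi] at ht
      exact ⟨Real.sqrt t, Set.mem_Ioi.mpr (Real.sqrt_lt_sqrt hT₀.le ht),
        Real.sq_sqrt (by linarith)⟩
  have hderiv : ∀ x ∈ Set.Ioi (Real.sqrt T₀),
      HasDerivWithinAt (fun s : ℝ => s ^ 2) (2 * x) (Set.Ioi (Real.sqrt T₀)) x := by
    intro x _
    simpa [mul_comm] using ((hasDerivAt_pow 2 x).hasDerivWithinAt)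
  have hinj : Set.InjOn (fun s : ℝ => s ^ 2) (Set.Ioi (Real.sqrt T₀)) := by
    intro x hx y hy hxy
    simp only [Set.mem_Ioi] at hx hy
    simp only at hxy
    nlinarith
  have hchg :
      (∫ t in Set.Ioi T₀, t ^ (-(1 : ℝ) / 2) * Real.exp (-(z - a * t) ^ 2 / (M * t)))
        = ∫ s in Set.Ioi (Real.sqrt T₀),
            |2 * s| • ((s ^ 2) ^ (-(1 : ℝ) / 2) *
              Real.exp (-(z - a * s ^ 2) ^ 2 / (M * s ^ 2))) := by
    rw [← himage,
      integral_image_eq_integral_abs_deriv_smul measurableSet_Ioi hderiv hinj]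
  rw [hchg]
  have hgint : Integrable (fun s : ℝ => 2 * Real.exp (-c * (s - s₀) ^ 2)) := by
    exact ((integrable_exp_neg_mul_sq hc).comp_sub_right s₀).const_mul 2
  -- pointwise bound
  have hpt : ∀ s ∈ Set.Ioi (Real.sqrt T₀),
      |2 * s| • ((s ^ 2) ^ (-(1 : ℝ) / 2) *
          Real.exp (-(z - a * s ^ 2) ^ 2 / (M * s ^ 2)))
        ≤ 2 * Real.exp (-c * (s - s₀) ^ 2) := by
    intro s hs
    simp only [Set.mem_Ioi] at hs
    have hspos : 0 < s := lt_trans hT₀' hs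
    have hrpow : (s ^ 2 : ℝ) ^ (-(1 : ℝ) / 2) = s⁻¹ := by
      rw [← Real.rpow_natCast s 2, ← Real.rpow_mul hspos.le]
      norm_num
      exact Real.rpow_neg_one s
    rw [hrpow, smul_eq_mul, abs_of_pos (by positivity)]
    have h2 : 2 * s * (s⁻¹ * Real.exp (-(z - a * s ^ 2) ^ 2 / (M * s ^ 2)))
        = 2 * Real.exp (-(z - a * s ^ 2) ^ 2 / (M * s ^ 2)) := by
      field_simp
    rw [h2]
    have habs : b * s * |s - s₀| ≤ |z + b * s ^ 2| := by
      rcases le_or_gt 0 z with hz | hz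
      · have hs₀0 : s₀ = 0 := by
          rw [hs₀def, max_eq_left (by linarith : -z ≤ 0)]; simp
        rw [hs₀0, sub_zero, abs_of_pos hspos,
          abs_of_pos (by nlinarith [mul_pos hb (pow_pos hspos 2)])]
        nlinarith [mul_pos hb (pow_pos hspos 2)]
      · have hmax : max 0 (-z) = -z := by
          rw [max_eq_right (by linarith : (0:ℝ) ≤ -z)]
        have hzval : z = -(b * s₀ ^ 2) := by rw [hs₀sq, hmax]; ring
        rw [hzval]
        have he : -(b * s₀ ^ 2) + b * s ^ 2 = b * ((s - s₀) * (s + s₀)) := by ring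
        rw [he, abs_mul, abs_mul, abs_of_pos hb,
          abs_of_pos (by linarith : (0:ℝ) < s + s₀)]
        have h3 := abs_nonneg (s - s₀)
        nlinarith [mul_nonneg (mul_nonneg hb.le h3) hs₀]
    have key : b ^ 2 * (s - s₀) ^ 2 * s ^ 2 ≤ (z + b * s ^ 2) ^ 2 := by
      have h4 := pow_le_pow_left₀ (by positivity) habs 2
      calc b ^ 2 * (s - s₀) ^ 2 * s ^ 2
          = (b * s * |s - s₀|) ^ 2 := by rw [mul_pow, mul_pow, sq_abs]; ring
        _ ≤ |z + b * s ^ 2| ^ 2 := h4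
        _ = (z + b * s ^ 2) ^ 2 := sq_abs _
    have hexp : -(z - a * s ^ 2) ^ 2 / (M * s ^ 2) ≤ -c * (s - s₀) ^ 2 := by
      rw [div_le_iff₀ (by positivity : (0:ℝ) < M * s ^ 2)]
      have hza : z - a * s ^ 2 = z + b * s ^ 2 := by rw [hbdef]; ring
      rw [hza]
      have heq : -c * (s - s₀) ^ 2 * (M * s ^ 2) = -(b ^ 2 * (s - s₀) ^ 2 * s ^ 2) := by
        rw [hcdef]; field_simp
      rw [heq]
      linarith
    exact mul_le_mul_of_nonneg_left (Real.exp_le_exp.mpr hexp) (by norm_num)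
  calc (∫ s in Set.Ioi (Real.sqrt T₀),
          |2 * s| • ((s ^ 2) ^ (-(1 : ℝ) / 2) *
            Real.exp (-(z - a * s ^ 2) ^ 2 / (M * s ^ 2))))
      ≤ ∫ s in Set.Ioi (Real.sqrt T₀), 2 * Real.exp (-c * (s - s₀) ^ 2) := by
        apply integral_mono_of_nonneg
        · filter_upwards with s
          have : (0:ℝ) ≤ (s ^ 2) ^ (-(1 : ℝ) / 2) := Real.rpow_nonneg (by positivity) _
          positivity
        · exact hgint.restrict
        · filter_upwards [self_mem_ae_restrict (measurableSet_Ioi)] with s hs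
          exact hpt s hs
    _ ≤ ∫ s : ℝ, 2 * Real.exp (-c * (s - s₀) ^ 2) := by
        apply setIntegral_le_integral hgint
        filter_upwards with s
        positivity
    _ = 2 * Real.sqrt (Real.pi / c) := by
        rw [integral_const_mul]
        have h8 : (∫ x : ℝ, Real.exp (-c * (x - s₀) ^ 2)) = ∫ x : ℝ, Real.exp (-c * x ^ 2) :=
          integral_sub_right_eq_self (fun x => Real.exp (-c * x ^ 2)) s₀
        rw [h8, integral_gaussian]
end

section
/- Fix a ∈ ℝ with a < 0 and T₀ > 0. The convected heat kernel satisfies the identity ∂_y K(x, t; y) = a^{−1} (∂_t K(x, t; y) − ∂_y² K(x, t; y)) for all x, y ∈ ℝ, t > 0. Consequently, for all T ≥ T₀, y ∈ ℝ and t ≥ T, ∫_T^t ∂_y K(x, s; y) ds = a^{−1}( K(x, t; y) − K(x, T; y) − ∫_T^t ∂_y² K(x, s; y) ds ); the improper integral ∫_T^{∞} ∂_y K(·, s; y) ds converges in L²(ℝ, dx), uniformly in y ∈ ℝ, to −a^{−1}( K(·, T; y) + ∫_T^{∞} ∂_y² K(·, s; y) ds ), and there is C > 0 with ‖∫_T^{∞}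 ∂_y K(·, s; y) ds‖_{L²(ℝ, dx)} ≤ C for all y ∈ ℝ and all T ≥ T₀. -/
open MeasureTheory

/-- The convected heat kernel `K(x,t;y) = t^{-1/2} exp(−(x−y−at)²/(4t))`. -/
noncomputable def heatK (a x t y : ℝ) : ℝ :=
  t ^ (-(1 : ℝ) / 2) * Real.exp (-(x - y - a * t) ^ 2 / (4 * t))

open Real

lemma hK_dy (a x t y : ℝ) (ht : 0 < t) :
    HasDerivAt (fun y' => heatK a x t y')
      (heatK a x t y * ((x - y - a * t) / (2 * t))) y := by
  have h1 : HasDerivAt (fun y' : ℝ => -(x - y' - a * t) ^ 2 / (4 * t))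
      ((x - y - a * t) / (2 * t)) y := by
    have : HasDerivAt (fun y' : ℝ => x - y' - a * t) (-1) y := by
      simpa using ((hasDerivAt_id y).const_sub x).sub_const (a * t)
    have := (this.pow 2).neg.div_const (4 * t)
    refine this.congr_deriv ?_
    field_simp
    ring
  have := (h1.exp).const_mul (t ^ (-(1:ℝ)/2))
  refine this.congr_deriv ?_
  unfold heatK
  ring

lemma hK_dyy (a x t y : ℝ) (ht : 0 < t) :
    HasDerivAt (fun y' => heatK a x t y' * ((x - y' - a * t) / (2 * t)))
      (heatK a x t y * ((x - y - a * t) ^ 2 / (4 * t ^ 2) - 1 / (2 * t))) y := by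
  have h2 : HasDerivAt (fun y' : ℝ => (x - y' - a * t) / (2 * t)) (-1 / (2 * t)) y := by
    have : HasDerivAt (fun y' : ℝ => x - y' - a * t) (-1) y := by
      simpa using ((hasDerivAt_id y).const_sub x).sub_const (a * t)
    simpa using this.div_const (2 * t)
  have := (hK_dy a x t y ht).mul h2
  refine this.congr_deriv ?_
  have ht' : (t:ℝ) ≠ 0 := ne_of_gt ht
  field_simp
  ring
lemma hK_dt (a x t y : ℝ) (ht : 0 < t) :
    HasDerivAt (fun t' => heatK a x t' y)
      (heatK a x t y * ((x - y - a * t) ^ 2 / (4 * t ^ 2)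
        + a * (x - y - a * t) / (2 * t) - 1 / (2 * t))) t := by
  have ht' : (t:ℝ) ≠ 0 := ne_of_gt ht
  have hpow : HasDerivAt (fun t' : ℝ => t' ^ (-(1:ℝ)/2))
      ((-(1:ℝ)/2) * t ^ ((-(1:ℝ)/2) - 1)) t :=
    Real.hasDerivAt_rpow_const (Or.inl ht')
  have hnum : HasDerivAt (fun t' : ℝ => -(x - y - a * t') ^ 2)
      (2 * a * (x - y - a * t)) t := by
    have h0 : HasDerivAt (fun t' : ℝ => x - y - a * t') (-a) t := by
      simpa using (((hasDerivAt_id t).const_mul a).const_sub (x - y))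
    have := (h0.pow 2).neg
    refine this.congr_deriv ?_
    ring
  have hden : HasDerivAt (fun t' : ℝ => 4 * t') 4 t := by
    simpa using (hasDerivAt_id t).const_mul (4:ℝ)
  have hexparg : HasDerivAt (fun t' : ℝ => -(x - y - a * t') ^ 2 / (4 * t'))
      ((2 * a * (x - y - a * t) * (4 * t) - (-(x - y - a * t) ^ 2) * 4) / (4 * t) ^ 2) t :=
    hnum.div hden (by positivity)
  have hexp := hexparg.exp
  have := hpow.mul hexp
  refine this.congr_deriv ?_
  unfold heatK
  have h32 : t ^ ((-(1:ℝ)/2) - 1) = t ^ (-(1:ℝ)/2) * t⁻¹ := by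
    rw [Real.rpow_sub ht, Real.rpow_one, div_eq_mul_inv]
  rw [h32]
  field_simp
  ring
-- squared lintegral of a Gaussian
lemma gauss_sq (c b m : ℝ) (hc : 0 ≤ c) (hb : 0 < b) :
    ∫⁻ x : ℝ, (ENNReal.ofReal (c * Real.exp (-(x - m) ^ 2 / b))) ^ 2
      = ENNReal.ofReal (c ^ 2 * Real.sqrt (π * b / 2)) := by
  have h1 : ∀ x : ℝ, (ENNReal.ofReal (c * Real.exp (-(x - m) ^ 2 / b))) ^ 2
      = ENNReal.ofReal (c ^ 2 * Real.exp (-(2 / b) * (x - m) ^ 2)) := by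
    intro x
    rw [← ENNReal.ofReal_pow (by positivity), mul_pow, ← Real.exp_nat_mul]
    have h : ((2:ℕ):ℝ) * (-(x - m) ^ 2 / b) = -(2/b) * (x-m)^2 := by
      push_cast; field_simp
    rw [h]
  simp_rw [h1]
  have hint : Integrable (fun x : ℝ => c ^ 2 * Real.exp (-(2 / b) * (x - m) ^ 2)) := by
    have := (integrable_exp_neg_mul_sq (show 0 < 2 / b by positivity)).comp_sub_right m
    exact this.const_mul _
  rw [← ofReal_integral_eq_lintegral_ofReal hint]
  · congr 1
    rw [integral_const_mul]
    rw [integral_sub_right_eq_self (fun x : ℝ => Real.exp (-(2 / b) * x ^ 2)) m,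
      integral_gaussian]
    congr 2
    field_simp
  · filter_upwards with x
    positivity
lemma elp_two_le {f : ℝ → ℝ} (hf : AEStronglyMeasurable f (volume : Measure ℝ))
    {B : ℝ} (hB : 0 ≤ B)
    (h : ∫⁻ x : ℝ, (‖f x‖₊ : ENNReal) ^ 2 ≤ ENNReal.ofReal (B ^ 2)) :
    eLpNorm f 2 volume ≤ ENNReal.ofReal B := by
  rw [eLpNorm_eq_lintegral_rpow_enorm_toReal (by norm_num) (by norm_num)]
  change (∫⁻ x, (‖f x‖₊ : ENNReal) ^ ((2:ENNReal).toReal)) ^ (1 / (2:ENNReal).toReal) ≤ _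
  have h2 : ∀ x : ℝ, (‖f x‖₊ : ENNReal) ^ ((2:ENNReal).toReal) = (‖f x‖₊ : ENNReal) ^ 2 := by
    intro x
    rw [ENNReal.toReal_ofNat, ← ENNReal.rpow_natCast]
    norm_num
  simp_rw [h2]
  calc (∫⁻ x : ℝ, (‖f x‖₊ : ENNReal) ^ 2) ^ (1 / (2:ENNReal).toReal)
      ≤ (ENNReal.ofReal (B ^ 2)) ^ (1 / (2:ENNReal).toReal) := by
        exact ENNReal.rpow_le_rpow h (by norm_num)
    _ = ENNReal.ofReal B := by
        rw [ENNReal.toReal_ofNat, ← Real.rpow_natCast B 2,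
          ← ENNReal.ofReal_rpow_of_nonneg hB (by norm_num)]
        rw [← ENNReal.rpow_mul]
        norm_num
noncomputable def Kd2 (a x s y : ℝ) : ℝ :=
  heatK a x s y * ((x - y - a * s) ^ 2 / (4 * s ^ 2) - 1 / (2 * s))

lemma z_exp {z : ℝ} (hz : 0 ≤ z) : z * Real.exp (-z) ≤ Real.exp (-z / 2) := by
  have h1 : z ≤ Real.exp (z / 2) := by
    have h := Real.add_one_le_exp (z / 4)
    have h2 : Real.exp (z / 4) ^ 2 = Real.exp (z / 2) := by
      rw [sq, ← Real.exp_add]; ring_nf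
    nlinarith [sq_nonneg (z - 4), Real.exp_nonneg (z / 4)]
  calc z * Real.exp (-z) ≤ Real.exp (z / 2) * Real.exp (-z) := by
        exact mul_le_mul_of_nonneg_right h1 (Real.exp_nonneg _)
    _ = Real.exp (-z / 2) := by rw [← Real.exp_add]; ring_nf

lemma kd2_bound (a x s y : ℝ) (hs : 0 < s) :
    |Kd2 a x s y| ≤ (3 / 2) * s ^ (-(3:ℝ) / 2) * Real.exp (-(x - y - a * s) ^ 2 / (8 * s)) := by
  set u := x - y - a * s with hu
  have hsne : s ≠ 0 := ne_of_gt hs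
  have hE : (0:ℝ) < Real.exp (-u ^ 2 / (4 * s)) := Real.exp_pos _
  have hz : (0:ℝ) ≤ u ^ 2 / (4 * s) := by positivity
  have key := z_exp hz
  have hexp1 : Real.exp (-(u ^ 2 / (4 * s))) = Real.exp (-u ^ 2 / (4 * s)) := by ring_nf
  have hexp2 : Real.exp (-(u ^ 2 / (4 * s)) / 2) = Real.exp (-u ^ 2 / (8 * s)) := by
    congr 1; field_simp; ring
  rw [hexp1, hexp2] at key
  -- key : u^2/(4s) * exp(-u^2/(4s)) ≤ exp(-u^2/(8s))
  have hmono : Real.exp (-u ^ 2 / (4 * s)) ≤ Real.exp (-u ^ 2 / (8 * s)) := by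
    apply Real.exp_le_exp.mpr
    rw [div_le_div_iff₀ (by positivity) (by positivity)]
    nlinarith [sq_nonneg u]
  have hpow : s ^ (-(3:ℝ) / 2) = s ^ (-(1:ℝ) / 2) * s⁻¹ := by
    rw [← Real.rpow_neg_one s, ← Real.rpow_add hs]; norm_num
  have hp2 : (0:ℝ) < s ^ (-(1:ℝ) / 2) := Real.rpow_pos_of_pos hs _
  rw [Kd2, heatK, mul_assoc, abs_mul, abs_mul]
  rw [abs_of_pos hp2, abs_of_pos hE, ← hu]
  have habs : |u ^ 2 / (4 * s ^ 2) - 1 / (2 * s)| ≤ u ^ 2 / (4 * s ^ 2) + 1 / (2 * s) := by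
    refine (abs_sub _ _).trans ?_
    rw [abs_of_nonneg (by positivity), abs_of_nonneg (by positivity)]
  calc s ^ (-(1:ℝ) / 2) * (Real.exp (-u ^ 2 / (4 * s)) * |u ^ 2 / (4 * s ^ 2) - 1 / (2 * s)|)
      ≤ s ^ (-(1:ℝ) / 2) * (Real.exp (-u ^ 2 / (4 * s)) * (u ^ 2 / (4 * s ^ 2) + 1 / (2 * s))) := by
        apply mul_le_mul_of_nonneg_left _ (le_of_lt hp2)
        exact mul_le_mul_of_nonneg_left habs (le_of_lt hE)
    _ ≤ s ^ (-(1:ℝ) / 2) * ((Real.exp (-u ^ 2 / (8 * s)) / s) + Real.exp (-u ^ 2 / (8 * s)) / (2 * s)) := by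
        apply mul_le_mul_of_nonneg_left _ (le_of_lt hp2)
        rw [mul_add]
        apply add_le_add
        · have : Real.exp (-u ^ 2 / (4 * s)) * (u ^ 2 / (4 * s ^ 2))
              = (u ^ 2 / (4 * s) * Real.exp (-u ^ 2 / (4 * s))) / s := by
            field_simp
          rw [this]
          exact div_le_div_of_nonneg_right key hs.le
        · calc Real.exp (-u ^ 2 / (4 * s)) * (1 / (2 * s))
              ≤ Real.exp (-u ^ 2 / (8 * s)) * (1 / (2 * s)) := by
                exact mul_le_mul_of_nonneg_right hmono (by positivity)
            _ = Real.exp (-u ^ 2 / (8 * s)) / (2 * s) := by ring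
    _ = (3 / 2) * s ^ (-(3:ℝ) / 2) * Real.exp (-u ^ 2 / (8 * s)) := by
        rw [hpow]; field_simp; ring
lemma cs_step {μ : Measure ℝ} (f w : ℝ → ENNReal) (hf : AEMeasurable f μ)
    (hw : AEMeasurable w μ) (hw0 : ∀ᵐ s ∂μ, w s ≠ 0) (hwt : ∀ᵐ s ∂μ, w s ≠ ⊤) :
    (∫⁻ s, f s ∂μ) ^ 2 ≤ (∫⁻ s, w s ∂μ) * ∫⁻ s, (f s) ^ 2 / w s ∂μ := by
  have hpq : Real.HolderConjugate 2 2 := Real.HolderConjugate.two_two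
  have hF : AEMeasurable (fun s => (w s) ^ ((1:ℝ)/2)) μ := hw.pow_const _
  have hG : AEMeasurable (fun s => f s / (w s) ^ ((1:ℝ)/2)) μ := hf.div hF
  have h := ENNReal.lintegral_mul_le_Lp_mul_Lq μ hpq hF hG
  have heq : ∫⁻ s, ((fun s => (w s) ^ ((1:ℝ)/2)) * fun s => f s / (w s) ^ ((1:ℝ)/2)) s ∂μ
      = ∫⁻ s, f s ∂μ := by
    apply lintegral_congr_ae
    filter_upwards [hw0, hwt] with s h0 ht
    simp only [Pi.mul_apply]
    rw [ENNReal.mul_div_cancel' (by simp [ENNReal.rpow_eq_zero_iff, h0, ht])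
      (by simp [ENNReal.rpow_eq_top_iff, h0, ht])]
  rw [heq] at h
  have hFp : ∫⁻ s, ((w s) ^ ((1:ℝ)/2)) ^ (2:ℝ) ∂μ = ∫⁻ s, w s ∂μ := by
    apply lintegral_congr
    intro s
    rw [← ENNReal.rpow_mul]
    norm_num
  have hGp : ∫⁻ s, (f s / (w s) ^ ((1:ℝ)/2)) ^ (2:ℝ) ∂μ = ∫⁻ s, (f s) ^ 2 / w s ∂μ := by
    apply lintegral_congr
    intro s
    rw [ENNReal.div_rpow_of_nonneg _ _ (by norm_num)]
    congr 1
    · rw [← ENNReal.rpow_natCast (f s) 2]; norm_num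
    · rw [← ENNReal.rpow_mul]; norm_num
  rw [hFp, hGp] at h
  calc (∫⁻ s, f s ∂μ) ^ 2
      ≤ ((∫⁻ s, w s ∂μ) ^ ((1:ℝ)/2) * (∫⁻ s, (f s) ^ 2 / w s ∂μ) ^ ((1:ℝ)/2)) ^ 2 := by
        exact pow_le_pow_left' h 2
    _ = (∫⁻ s, w s ∂μ) * ∫⁻ s, (f s) ^ 2 / w s ∂μ := by
        rw [mul_pow, ← ENNReal.rpow_natCast (_ ^ ((1:ℝ)/2)) 2, ← ENNReal.rpow_natCast (_ ^ ((1:ℝ)/2)) 2,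
          ← ENNReal.rpow_mul, ← ENNReal.rpow_mul]
        norm_num

noncomputable def Kd1 (a x s y : ℝ) : ℝ :=
  heatK a x s y * ((x - y - a * s) / (2 * s))

noncomputable def Kdt (a x s y : ℝ) : ℝ :=
  heatK a x s y * ((x - y - a * s) ^ 2 / (4 * s ^ 2)
    + a * (x - y - a * s) / (2 * s) - 1 / (2 * s))

lemma deriv_heatK_y (a x t y : ℝ) (ht : 0 < t) :
    deriv (fun y' => heatK a x t y') y = Kd1 a x t y :=
  (hK_dy a x t y ht).deriv

lemma iter2_heatK_y (a x t y : ℝ) (ht : 0 < t) :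
    iteratedDeriv 2 (fun y' => heatK a x t y') y = Kd2 a x t y := by
  rw [show (2:ℕ) = 1 + 1 from rfl, iteratedDeriv_succ, iteratedDeriv_one]
  have hd : (deriv fun y' => heatK a x t y') = fun y' => Kd1 a x t y' := by
    funext y'
    exact (hK_dy a x t y' ht).deriv
  rw [hd]
  exact (hK_dyy a x t y ht).deriv

lemma contOn_heatK_s (a x y : ℝ) : ContinuousOn (fun s => heatK a x s y) (Set.Ioi 0) := by
  apply ContinuousOn.mul
  · exact fun s hs => (Real.continuousAt_rpow_const s _ (Or.inl (ne_of_gt hs))).continuousWithinAt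
  · apply Real.continuous_exp.comp_continuousOn
    exact ContinuousOn.div (by fun_prop) (by fun_prop)
      (fun s hs => by simp at hs; positivity)

lemma contOn_Kd2_s (a x y : ℝ) : ContinuousOn (fun s => Kd2 a x s y) (Set.Ioi 0) := by
  apply (contOn_heatK_s a x y).mul
  apply ContinuousOn.sub
  · exact ContinuousOn.div (by fun_prop) (by fun_prop) (fun s hs => by simp at hs; positivity)
  · exact ContinuousOn.div (by fun_prop) (by fun_prop) (fun s hs => by simp at hs; positivity)

lemma contOn_Kdt_s (a x y : ℝ) : ContinuousOn (fun s => Kdt a x s y) (Set.Ioi 0) := by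
  apply (contOn_heatK_s a x y).mul
  apply ContinuousOn.sub
  apply ContinuousOn.add
  · exact ContinuousOn.div (by fun_prop) (by fun_prop) (fun s hs => by simp at hs; positivity)
  · exact ContinuousOn.div (by fun_prop) (by fun_prop) (fun s hs => by simp at hs; positivity)
  · exact ContinuousOn.div (by fun_prop) (by fun_prop) (fun s hs => by simp at hs; positivity)

lemma cont_Kd2_x (a s y : ℝ) (hs : s ≠ 0) : Continuous (fun x => Kd2 a x s y) := by
  unfold Kd2 heatK
  have h4 : (4:ℝ) * s ≠ 0 := by simp [hs]
  fun_prop (disch := assumption)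

lemma intOn_Kd2 (a x y T : ℝ) (hT : 0 < T) :
    IntegrableOn (fun s => Kd2 a x s y) (Set.Ioi T) := by
  have hbound : IntegrableOn (fun s : ℝ => (3/2) * s ^ (-(3:ℝ)/2)) (Set.Ioi T) :=
    (integrableOn_Ioi_rpow_of_lt (by norm_num) hT).const_mul _
  apply Integrable.mono' hbound
  · exact ((contOn_Kd2_s a x y).mono
      (fun s hs => lt_trans hT hs)).aestronglyMeasurable measurableSet_Ioi
  · filter_upwards [ae_restrict_mem measurableSet_Ioi] with s hs
    have hs0 : 0 < s := lt_trans hT hs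
    rw [Real.norm_eq_abs]
    refine (kd2_bound a x s y hs0).trans ?_
    have he : Real.exp (-(x - y - a * s) ^ 2 / (8 * s)) ≤ 1 := by
      rw [Real.exp_le_one_iff]
      apply div_nonpos_of_nonpos_of_nonneg (neg_nonpos.mpr (sq_nonneg _)) (by positivity)
    have hp : (0:ℝ) ≤ (3/2) * s ^ (-(3:ℝ)/2) := by positivity
    nlinarith

lemma elp_heatK (a t y : ℝ) (ht : 0 < t) :
    eLpNorm (fun x => heatK a x t y) 2 volume
      ≤ ENNReal.ofReal (Real.sqrt (Real.sqrt (2 * π)) * t ^ (-(1:ℝ)/4)) := by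
  have hcont : Continuous (fun x => heatK a x t y) := by
    unfold heatK
    have h4 : (4:ℝ) * t ≠ 0 := by positivity
    fun_prop (disch := assumption)
  apply elp_two_le hcont.aestronglyMeasurable (by positivity)
  have hnn : ∀ x : ℝ, (‖heatK a x t y‖₊ : ENNReal) = ENNReal.ofReal (heatK a x t y) := by
    intro x
    exact (Real.enorm_eq_ofReal (show (0:ℝ) ≤ heatK a x t y by unfold heatK; positivity))
  have hform : ∀ x : ℝ, heatK a x t y
      = t ^ (-(1:ℝ)/2) * Real.exp (-(x - (y + a * t)) ^ 2 / (4 * t)) := by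
    intro x; unfold heatK; ring_nf
  calc ∫⁻ x : ℝ, (‖heatK a x t y‖₊ : ENNReal) ^ 2
      = ∫⁻ x : ℝ, (ENNReal.ofReal (t ^ (-(1:ℝ)/2)
          * Real.exp (-(x - (y + a * t)) ^ 2 / (4 * t)))) ^ 2 := by
        apply lintegral_congr; intro x; rw [hnn, hform]
    _ = ENNReal.ofReal ((t ^ (-(1:ℝ)/2)) ^ 2 * Real.sqrt (π * (4 * t) / 2)) := by
        exact gauss_sq _ _ _ (by positivity) (by positivity)
    _ ≤ ENNReal.ofReal ((Real.sqrt (Real.sqrt (2 * π)) * t ^ (-(1:ℝ)/4)) ^ 2) := by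
        apply ENNReal.ofReal_le_ofReal
        apply le_of_eq
        have h1 : (t ^ (-(1:ℝ)/2)) ^ 2 = t ^ (-(1:ℝ)) := by
          rw [← Real.rpow_natCast (t ^ (-(1:ℝ)/2)) 2, ← Real.rpow_mul ht.le]
          norm_num
        have h2 : Real.sqrt (π * (4 * t) / 2) = Real.sqrt (2 * π) * t ^ ((1:ℝ)/2) := by
          rw [show π * (4 * t) / 2 = (2 * π) * t by ring, Real.sqrt_mul (by positivity),
            Real.sqrt_eq_rpow t]
        have h3 : (Real.sqrt (Real.sqrt (2 * π)) * t ^ (-(1:ℝ)/4)) ^ 2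
            = Real.sqrt (2 * π) * t ^ (-(1:ℝ)/2) := by
          rw [mul_pow, Real.sq_sqrt (Real.sqrt_nonneg _),
            ← Real.rpow_natCast (t ^ (-(1:ℝ)/4)) 2, ← Real.rpow_mul ht.le]
          norm_num
        have h4 : t ^ (-(1:ℝ)) * t ^ ((1:ℝ)/2) = t ^ (-(1:ℝ)/2) := by
          rw [← Real.rpow_add ht]; norm_num
        calc (t ^ (-(1:ℝ)/2)) ^ 2 * Real.sqrt (π * (4 * t) / 2)
            = Real.sqrt (2 * π) * (t ^ (-(1:ℝ)) * t ^ ((1:ℝ)/2)) := by rw [h1, h2]; ring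
          _ = (Real.sqrt (Real.sqrt (2 * π)) * t ^ (-(1:ℝ)/4)) ^ 2 := by rw [h4, h3]

lemma int_Ioi_rpow54 (t : ℝ) (ht : 0 < t) :
    ∫ s in Set.Ioi t, s ^ (-(5:ℝ)/4) = 4 * t ^ (-(1:ℝ)/4) := by
  rw [integral_Ioi_rpow_of_lt (by norm_num) ht]
  rw [show (-(5:ℝ)/4 + 1) = -(1:ℝ)/4 by norm_num]
  ring

lemma lint_Ioi_rpow54 (t : ℝ) (ht : 0 < t) (c : ℝ) (hc : 0 ≤ c) :
    ∫⁻ s in Set.Ioi t, ENNReal.ofReal (c * s ^ (-(5:ℝ)/4))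
      = ENNReal.ofReal (c * (4 * t ^ (-(1:ℝ)/4))) := by
  have hint : IntegrableOn (fun s : ℝ => c * s ^ (-(5:ℝ)/4)) (Set.Ioi t) :=
    (integrableOn_Ioi_rpow_of_lt (by norm_num) ht).const_mul _
  rw [← ofReal_integral_eq_lintegral_ofReal hint]
  · rw [MeasureTheory.integral_const_mul, int_Ioi_rpow54 t ht]
  · filter_upwards [ae_restrict_mem measurableSet_Ioi] with s hs
    have : (0:ℝ) < s := lt_trans ht hs
    positivity


lemma cont_heatK_x (a t y : ℝ) (ht : (4:ℝ) * t ≠ 0) : Continuous (fun x => heatK a x t y) := by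
  unfold heatK
  fun_prop (disch := assumption)

lemma cont_intKd2_x (a t y : ℝ) (ht : 0 < t) :
    Continuous (fun x => ∫ s in Set.Ioi t, Kd2 a x s y) := by
  apply continuous_of_dominated (bound := fun s : ℝ => (3/2) * s ^ (-(3:ℝ)/2))
  · intro x
    exact ((contOn_Kd2_s a x y).mono
      (fun s hs => lt_trans ht hs)).aestronglyMeasurable measurableSet_Ioi
  · intro x
    filter_upwards [ae_restrict_mem measurableSet_Ioi] with s hs
    have hs0 : 0 < s := lt_trans ht hs
    rw [Real.norm_eq_abs]
    refine (kd2_bound a x s y hs0).trans ?_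
    have he : Real.exp (-(x - y - a * s) ^ 2 / (8 * s)) ≤ 1 := by
      rw [Real.exp_le_one_iff]
      apply div_nonpos_of_nonpos_of_nonneg (neg_nonpos.mpr (sq_nonneg _)) (by positivity)
    have hp : (0:ℝ) ≤ (3/2) * s ^ (-(3:ℝ)/2) := by positivity
    nlinarith
  · exact (integrableOn_Ioi_rpow_of_lt (by norm_num) ht).const_mul _
  · filter_upwards [ae_restrict_mem measurableSet_Ioi] with s hs
    exact cont_Kd2_x a s y (ne_of_gt (lt_trans ht hs))

set_option maxHeartbeats 1000000 in
lemma elp_intKd2 (a t y : ℝ) (ht : 0 < t) :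
    eLpNorm (fun x => ∫ s in Set.Ioi t, Kd2 a x s y) 2 volume
      ≤ ENNReal.ofReal (Real.sqrt (72 * Real.sqrt π) * t ^ (-(1:ℝ)/4)) := by
  -- the Gaussian majorant and the Cauchy–Schwarz weight
  set GG : ℝ → ℝ → ENNReal := fun x s =>
    ENNReal.ofReal ((3/2) * s ^ (-(3:ℝ)/2) * Real.exp (-(x - y - a * s) ^ 2 / (8 * s))) with hGG
  set W : ℝ → ENNReal := fun s => ENNReal.ofReal (s ^ (-(5:ℝ)/4)) with hW
  have hGmeas : Measurable (fun p : ℝ × ℝ => GG p.1 p.2) := by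
    apply ENNReal.measurable_ofReal.comp
    apply Measurable.mul
    · exact (measurable_snd.pow_const _ |>.const_mul _)
    · fun_prop
  have hWmeas : Measurable W := by
    exact ENNReal.measurable_ofReal.comp (measurable_id.pow_const _)
  have hcont : Continuous (fun x => ∫ s in Set.Ioi t, Kd2 a x s y) := cont_intKd2_x a t y ht
  apply elp_two_le hcont.aestronglyMeasurable (by positivity)
  -- pointwise: ‖h x‖² ≤ (∫⁻ GG x)²
  have h1 : ∀ x : ℝ, (‖∫ s in Set.Ioi t, Kd2 a x s y‖₊ : ENNReal) ^ 2
      ≤ (∫⁻ s in Set.Ioi t, GG x s) ^ 2 := by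
    intro x
    apply pow_le_pow_left' _ 2
    refine (enorm_integral_le_lintegral_enorm _).trans ?_
    apply lintegral_mono_ae
    filter_upwards [ae_restrict_mem measurableSet_Ioi] with s hs
    have hs0 : 0 < s := lt_trans ht hs
    rw [Real.enorm_eq_ofReal_abs]
    exact ENNReal.ofReal_le_ofReal (kd2_bound a x s y hs0)
  -- Cauchy–Schwarz for each x
  have h2 : ∀ x : ℝ, (∫⁻ s in Set.Ioi t, GG x s) ^ 2
      ≤ (∫⁻ s in Set.Ioi t, W s) * ∫⁻ s in Set.Ioi t, (GG x s) ^ 2 / W s := by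
    intro x
    apply cs_step
    · exact (hGmeas.comp measurable_prodMk_left).aemeasurable
    · exact hWmeas.aemeasurable
    · filter_upwards [ae_restrict_mem measurableSet_Ioi] with s hs
      have hs0 : 0 < s := lt_trans ht hs
      simp only [hW, ne_eq, ENNReal.ofReal_eq_zero, not_le]
      positivity
    · filter_upwards with s
      exact ENNReal.ofReal_ne_top
  -- the weight integral
  have hWI : ∫⁻ s in Set.Ioi t, W s = ENNReal.ofReal (4 * t ^ (-(1:ℝ)/4)) := by
    have := lint_Ioi_rpow54 t ht 1 (by norm_num)
    simpa using this
  -- the inner x-integral for fixed s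
  have h5 : ∀ s, s ∈ Set.Ioi t → (∫⁻ x : ℝ, (GG x s) ^ 2 / W s)
      = ENNReal.ofReal ((9/2) * Real.sqrt π * s ^ (-(5:ℝ)/4)) := by
    intro s hs
    have hs0 : 0 < s := lt_trans ht hs
    have hWs0 : W s ≠ 0 := by
      simp only [hW, ne_eq, ENNReal.ofReal_eq_zero, not_le]; positivity
    have hdiv : ∀ x : ℝ, (GG x s) ^ 2 / W s = (GG x s) ^ 2 * (W s)⁻¹ := by
      intro x; rw [div_eq_mul_inv]
    simp_rw [hdiv]
    rw [lintegral_mul_const' _ _ (by simp [hWs0])]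
    have hform : ∀ x : ℝ, GG x s = ENNReal.ofReal ((3/2) * s ^ (-(3:ℝ)/2)
        * Real.exp (-(x - (y + a * s)) ^ 2 / (8 * s))) := by
      intro x; simp only [hGG]; ring_nf
    have hg : (∫⁻ x : ℝ, (GG x s) ^ 2)
        = ENNReal.ofReal (((3/2) * s ^ (-(3:ℝ)/2)) ^ 2 * Real.sqrt (π * (8 * s) / 2)) := by
      simp_rw [hform]
      exact gauss_sq _ _ _ (by positivity) (by positivity)
    rw [hg]
    have hval : ((3/2) * s ^ (-(3:ℝ)/2)) ^ 2 * Real.sqrt (π * (8 * s) / 2)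
        = (9/2) * Real.sqrt π * s ^ (-(5:ℝ)/2) := by
      have e1 : (s ^ (-(3:ℝ)/2)) ^ 2 = s ^ (-(3:ℝ)) := by
        rw [← Real.rpow_natCast (s ^ (-(3:ℝ)/2)) 2, ← Real.rpow_mul hs0.le]; norm_num
      have e2 : Real.sqrt (π * (8 * s) / 2) = 2 * Real.sqrt π * s ^ ((1:ℝ)/2) := by
        rw [show π * (8 * s) / 2 = 4 * π * s by ring, Real.sqrt_mul (by positivity),
          Real.sqrt_mul (by norm_num) π, Real.sqrt_eq_rpow s]
        rw [show (4:ℝ) = 2^2 by norm_num, Real.sqrt_sq (by norm_num)]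
      have e3 : s ^ (-(3:ℝ)) * s ^ ((1:ℝ)/2) = s ^ (-(5:ℝ)/2) := by
        rw [← Real.rpow_add hs0]; norm_num
      calc ((3/2) * s ^ (-(3:ℝ)/2)) ^ 2 * Real.sqrt (π * (8 * s) / 2)
          = (9/4) * (2 * Real.sqrt π) * (s ^ (-(3:ℝ)) * s ^ ((1:ℝ)/2)) := by
            rw [mul_pow, e1, e2]; ring
        _ = (9/2) * Real.sqrt π * s ^ (-(5:ℝ)/2) := by rw [e3]; ring
    rw [hval, hW]
    rw [← ENNReal.ofReal_inv_of_pos (by positivity),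
      ← ENNReal.ofReal_mul (by positivity)]
    congr 1
    rw [← Real.rpow_neg hs0.le, mul_assoc, ← Real.rpow_add hs0]
    norm_num
  -- put everything together
  have hswap : (∫⁻ x : ℝ, ∫⁻ s in Set.Ioi t, (GG x s) ^ 2 / W s)
      = ∫⁻ s in Set.Ioi t, ∫⁻ x : ℝ, (GG x s) ^ 2 / W s := by
    apply lintegral_lintegral_swap
    apply Measurable.aemeasurable
    exact ((hGmeas.pow_const 2).div (hWmeas.comp measurable_snd))
  have hinner : (∫⁻ s in Set.Ioi t, ∫⁻ x : ℝ, (GG x s) ^ 2 / W s)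
      = ENNReal.ofReal ((9/2) * Real.sqrt π * (4 * t ^ (-(1:ℝ)/4))) := by
    rw [setLIntegral_congr_fun measurableSet_Ioi h5]
    exact lint_Ioi_rpow54 t ht _ (by positivity)
  calc ∫⁻ x : ℝ, (‖∫ s in Set.Ioi t, Kd2 a x s y‖₊ : ENNReal) ^ 2
      ≤ ∫⁻ x : ℝ, (∫⁻ s in Set.Ioi t, W s) * ∫⁻ s in Set.Ioi t, (GG x s) ^ 2 / W s := by
        exact lintegral_mono (fun x => (h1 x).trans (h2 x))
    _ = (∫⁻ s in Set.Ioi t, W s) * ∫⁻ x : ℝ, ∫⁻ s in Set.Ioi t, (GG x s) ^ 2 / W s := by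
        rw [lintegral_const_mul']
        rw [hWI]; exact ENNReal.ofReal_ne_top
    _ = ENNReal.ofReal (4 * t ^ (-(1:ℝ)/4))
          * ENNReal.ofReal ((9/2) * Real.sqrt π * (4 * t ^ (-(1:ℝ)/4))) := by
        rw [hWI, hswap, hinner]
    _ ≤ ENNReal.ofReal ((Real.sqrt (72 * Real.sqrt π) * t ^ (-(1:ℝ)/4)) ^ 2) := by
        rw [← ENNReal.ofReal_mul (by positivity)]
        apply ENNReal.ofReal_le_ofReal
        apply le_of_eq
        have e4 : t ^ (-(1:ℝ)/4) * t ^ (-(1:ℝ)/4) = t ^ (-(1:ℝ)/2) := by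
          rw [← Real.rpow_add ht]; norm_num
        have e5 : (Real.sqrt (72 * Real.sqrt π) * t ^ (-(1:ℝ)/4)) ^ 2
            = 72 * Real.sqrt π * (t ^ (-(1:ℝ)/4) * t ^ (-(1:ℝ)/4)) := by
          rw [mul_pow, Real.sq_sqrt (by positivity)]; ring
        rw [e5]
        ring

lemma kd1_eq {a : ℝ} (ha : a ≠ 0) (x t y : ℝ) (ht : 0 < t) :
    Kd1 a x t y = a⁻¹ * (Kdt a x t y - Kd2 a x t y) := by
  unfold Kd1 Kdt Kd2
  have ht' : t ≠ 0 := ne_of_gt ht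
  field_simp
  ring

lemma part2 (a : ℝ) (ha : a ≠ 0) {T t : ℝ} (hT : 0 < T) (htT : T ≤ t) (x y : ℝ) :
    (∫ s in Set.Ioc T t, Kd1 a x s y)
      = a⁻¹ * (heatK a x t y - heatK a x T y - ∫ s in Set.Ioc T t, Kd2 a x s y) := by
  have hsub : Set.Icc T t ⊆ Set.Ioi (0:ℝ) := fun s hs => lt_of_lt_of_le hT hs.1
  have IKd2 : IntegrableOn (fun s => Kd2 a x s y) (Set.Ioc T t) :=
    (intOn_Kd2 a x y T hT).mono_set Set.Ioc_subset_Ioi_self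
  have IKdt : IntegrableOn (fun s => Kdt a x s y) (Set.Ioc T t) :=
    (((contOn_Kdt_s a x y).mono hsub).integrableOn_Icc).mono_set Set.Ioc_subset_Icc_self
  have hFTC : (∫ s in Set.Ioc T t, Kdt a x s y) = heatK a x t y - heatK a x T y := by
    rw [← intervalIntegral.integral_of_le htT]
    apply intervalIntegral.integral_eq_sub_of_hasDerivAt
    · intro s hs
      rw [Set.uIcc_of_le htT] at hs
      exact hK_dt a x s y (hsub hs)
    · rw [intervalIntegrable_iff_integrableOn_Ioc_of_le htT]
      exact IKdt
  calc (∫ s in Set.Ioc T t, Kd1 a x s y)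
      = ∫ s in Set.Ioc T t, a⁻¹ * (Kdt a x s y - Kd2 a x s y) := by
        apply setIntegral_congr_fun measurableSet_Ioc
        intro s hs
        exact kd1_eq ha x s y (lt_trans hT hs.1)
    _ = a⁻¹ * ((∫ s in Set.Ioc T t, Kdt a x s y) - ∫ s in Set.Ioc T t, Kd2 a x s y) := by
        rw [MeasureTheory.integral_const_mul, integral_sub IKdt IKd2]
    _ = a⁻¹ * (heatK a x t y - heatK a x T y - ∫ s in Set.Ioc T t, Kd2 a x s y) := by
        rw [hFTC]

lemma keyB (a : ℝ) (ha : a ≠ 0) {t : ℝ} (ht : 0 < t) (y : ℝ) :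
    eLpNorm (fun x => a⁻¹ * (heatK a x t y + ∫ s in Set.Ioi t, Kd2 a x s y)) 2 volume
      ≤ ENNReal.ofReal (|a⁻¹| * (Real.sqrt (Real.sqrt (2 * π))
          + Real.sqrt (72 * Real.sqrt π)) * t ^ (-(1:ℝ)/4)) := by
  have hg : Continuous fun x => heatK a x t y := cont_heatK_x a t y (by positivity)
  have hh := cont_intKd2_x a t y ht
  have hsmul : (fun x => a⁻¹ * (heatK a x t y + ∫ s in Set.Ioi t, Kd2 a x s y))
      = a⁻¹ • (fun x => heatK a x t y + ∫ s in Set.Ioi t, Kd2 a x s y) := rfl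
  rw [hsmul, eLpNorm_const_smul]
  calc (‖a⁻¹‖₊ : ENNReal) * eLpNorm (fun x => heatK a x t y
          + ∫ s in Set.Ioi t, Kd2 a x s y) 2 volume
      ≤ (‖a⁻¹‖₊ : ENNReal) * (eLpNorm (fun x => heatK a x t y) 2 volume
          + eLpNorm (fun x => ∫ s in Set.Ioi t, Kd2 a x s y) 2 volume) := by
        apply mul_le_mul_right
        exact eLpNorm_add_le hg.aestronglyMeasurable hh.aestronglyMeasurable (by norm_num)
    _ ≤ (‖a⁻¹‖₊ : ENNReal)
          * (ENNReal.ofReal (Real.sqrt (Real.sqrt (2 * π)) * t ^ (-(1:ℝ)/4))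
            + ENNReal.ofReal (Real.sqrt (72 * Real.sqrt π) * t ^ (-(1:ℝ)/4))) := by
        exact mul_le_mul_right (add_le_add (elp_heatK a t y ht) (elp_intKd2 a t y ht)) _
    _ = ENNReal.ofReal (|a⁻¹| * (Real.sqrt (Real.sqrt (2 * π))
          + Real.sqrt (72 * Real.sqrt π)) * t ^ (-(1:ℝ)/4)) := by
        rw [← ENNReal.ofReal_add (by positivity) (by positivity),
          show (‖a⁻¹‖₊ : ENNReal) = ENNReal.ofReal |a⁻¹| from Real.enorm_eq_ofReal_abs _, ← ENNReal.ofReal_mul (abs_nonneg _)]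
        congr 1
        ring

/-- The cancellation identity `∂_y K = a⁻¹(∂_t K − ∂_y² K)`, the corresponding
time-integrated identity, and conditional convergence in `L²(dx)`, uniformly in `y`, of
`∫_T^∞ ∂_y K(·,s;y) ds` to `−a⁻¹(K(·,T;y) + ∫_T^∞ ∂_y² K(·,s;y) ds)`, with a uniform
`L²` bound on the limit. -/
theorem stmt11 (a : ℝ) (ha : a < 0) (T₀ : ℝ) (hT₀ : 0 < T₀) :
    (∀ x t y : ℝ, 0 < t →
      deriv (fun y' => heatK a x t y') y
        = a⁻¹ * (deriv (fun t' => heatK a x t' y) t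
            - iteratedDeriv 2 (fun y' => heatK a x t y') y)) ∧
    (∀ T, T₀ ≤ T → ∀ t, T ≤ t → ∀ x y : ℝ,
      (∫ s in Set.Ioc T t, deriv (fun y' => heatK a x s y') y)
        = a⁻¹ * (heatK a x t y - heatK a x T y
            - ∫ s in Set.Ioc T t, iteratedDeriv 2 (fun y' => heatK a x s y') y)) ∧
    (∃ C > (0 : ℝ),
      (∀ T, T₀ ≤ T → ∀ η > (0 : ℝ), ∃ t₁ : ℝ, ∀ t, t₁ ≤ t → ∀ y : ℝ,
        eLpNorm (fun x =>
            (∫ s in Set.Ioc T t, deriv (fun y' => heatK a x s y') y)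
              - (-(a⁻¹) * (heatK a x T y
                  + ∫ s in Set.Ioi T, iteratedDeriv 2 (fun y' => heatK a x s y') y)))
          2 volume ≤ ENNReal.ofReal η) ∧
      (∀ T, T₀ ≤ T → ∀ y : ℝ,
        eLpNorm (fun x =>
            -(a⁻¹) * (heatK a x T y
              + ∫ s in Set.Ioi T, iteratedDeriv 2 (fun y' => heatK a x s y') y))
          2 volume ≤ ENNReal.ofReal C)) := by

  have ha0 : a ≠ 0 := ne_of_lt ha
  set c₀ : ℝ := |a⁻¹| * (Real.sqrt (Real.sqrt (2 * π)) + Real.sqrt (72 * Real.sqrt π)) with hc₀def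
  have hc₀ : 0 < c₀ := by
    apply mul_pos (abs_pos.mpr (inv_ne_zero ha0))
    positivity
  have erpow : ∀ u : ℝ, 0 < u → u ^ (-(1:ℝ)/4) = (u ^ ((1:ℝ)/4))⁻¹ := by
    intro u hu
    rw [show (-(1:ℝ)/4) = -((1:ℝ)/4) by norm_num, Real.rpow_neg hu.le]
  refine ⟨?_, ?_, ?_⟩
  · -- part 1
    intro x t y ht
    rw [deriv_heatK_y a x t y ht, iter2_heatK_y a x t y ht, (hK_dt a x t y ht).deriv]
    exact kd1_eq ha0 x t y ht
  · -- part 2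
    intro T hT t htT x y
    have h0T : 0 < T := lt_of_lt_of_le hT₀ hT
    have e1 : (∫ s in Set.Ioc T t, deriv (fun y' => heatK a x s y') y)
        = ∫ s in Set.Ioc T t, Kd1 a x s y :=
      setIntegral_congr_fun measurableSet_Ioc
        (fun s hs => deriv_heatK_y a x s y (lt_trans h0T hs.1))
    have e2 : (∫ s in Set.Ioc T t, iteratedDeriv 2 (fun y' => heatK a x s y') y)
        = ∫ s in Set.Ioc T t, Kd2 a x s y :=
      setIntegral_congr_fun measurableSet_Ioc
        (fun s hs => iter2_heatK_y a x s y (lt_trans h0T hs.1))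
    rw [e1, e2]
    exact part2 a ha0 h0T htT x y
  · -- part 3
    refine ⟨c₀ * T₀ ^ (-(1:ℝ)/4) + 1, by positivity, ?_, ?_⟩
    · -- convergence
      intro T hT η hη
      have h0T : 0 < T := lt_of_lt_of_le hT₀ hT
      set δ : ℝ := η / c₀ with hδdef
      have hδ : 0 < δ := by positivity
      refine ⟨max T (max 1 (δ⁻¹ ^ (4:ℕ))), fun t htt y => ?_⟩
      have htT : T ≤ t := le_trans (le_max_left _ _) htt
      have h0t : 0 < t := lt_of_lt_of_le h0T htT
      have hfun : (fun x => (∫ s in Set.Ioc T t, deriv (fun y' => heatK a x s y') y)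
              - (-(a⁻¹) * (heatK a x T y
                  + ∫ s in Set.Ioi T, iteratedDeriv 2 (fun y' => heatK a x s y') y)))
          = fun x => a⁻¹ * (heatK a x t y + ∫ s in Set.Ioi t, Kd2 a x s y) := by
        funext x
        have e1 : (∫ s in Set.Ioc T t, deriv (fun y' => heatK a x s y') y)
            = ∫ s in Set.Ioc T t, Kd1 a x s y :=
          setIntegral_congr_fun measurableSet_Ioc
            (fun s hs => deriv_heatK_y a x s y (lt_trans h0T hs.1))
        have e2 : (∫ s in Set.Ioi T, iteratedDeriv 2 (fun y' => heatK a x s y') y)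
            = ∫ s in Set.Ioi T, Kd2 a x s y :=
          setIntegral_congr_fun measurableSet_Ioi
            (fun s hs => iter2_heatK_y a x s y (lt_trans h0T hs))
        have e3 := part2 a ha0 h0T htT x y
        have e4 : (∫ s in Set.Ioi T, Kd2 a x s y)
            = (∫ s in Set.Ioc T t, Kd2 a x s y) + ∫ s in Set.Ioi t, Kd2 a x s y := by
          rw [← Set.Ioc_union_Ioi_eq_Ioi htT]
          exact setIntegral_union (Set.Ioc_disjoint_Ioi le_rfl) measurableSet_Ioi
            ((intOn_Kd2 a x y T h0T).mono_set Set.Ioc_subset_Ioi_self)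
            (intOn_Kd2 a x y t h0t)
        rw [e1, e2, e3, e4]
        ring
      rw [hfun]
      refine (keyB a ha0 h0t y).trans (ENNReal.ofReal_le_ofReal ?_)
      have h40 : δ⁻¹ ^ (4:ℕ) ≤ t :=
        le_trans (le_trans (le_max_right _ _) (le_max_right _ _)) htt
      have h4 : δ⁻¹ ≤ t ^ ((1:ℝ)/4) := by
        calc δ⁻¹ = (δ⁻¹ ^ (4:ℕ)) ^ ((1:ℝ)/4) := by
              rw [← Real.rpow_natCast δ⁻¹ 4, ← Real.rpow_mul (by positivity)]
              norm_num
          _ ≤ t ^ ((1:ℝ)/4) := Real.rpow_le_rpow (by positivity) h40 (by norm_num)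
      have h5 : t ^ (-(1:ℝ)/4) ≤ δ := by
        rw [erpow t h0t]
        calc (t ^ ((1:ℝ)/4))⁻¹ ≤ (δ⁻¹)⁻¹ := by
              apply inv_anti₀ (by positivity) h4
          _ = δ := inv_inv δ
      calc c₀ * t ^ (-(1:ℝ)/4) ≤ c₀ * δ := by
            exact mul_le_mul_of_nonneg_left h5 hc₀.le
        _ = η := by
            rw [hδdef, mul_div_cancel₀ _ (ne_of_gt hc₀)]
    · -- uniform bound
      intro T hT y
      have h0T : 0 < T := lt_of_lt_of_le hT₀ hT
      have hfun : (fun x => -(a⁻¹) * (heatK a x T y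
              + ∫ s in Set.Ioi T, iteratedDeriv 2 (fun y' => heatK a x s y') y))
          = fun x => -(a⁻¹ * (heatK a x T y + ∫ s in Set.Ioi T, Kd2 a x s y)) := by
        funext x
        have e2 : (∫ s in Set.Ioi T, iteratedDeriv 2 (fun y' => heatK a x s y') y)
            = ∫ s in Set.Ioi T, Kd2 a x s y :=
          setIntegral_congr_fun measurableSet_Ioi
            (fun s hs => iter2_heatK_y a x s y (lt_trans h0T hs))
        rw [e2]
        ring
      rw [hfun]
      rw [show (fun x => -(a⁻¹ * (heatK a x T y + ∫ s in Set.Ioi T, Kd2 a x s y)))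
          = -(fun x => a⁻¹ * (heatK a x T y + ∫ s in Set.Ioi T, Kd2 a x s y)) from rfl,
        eLpNorm_neg]
      refine (keyB a ha0 h0T y).trans (ENNReal.ofReal_le_ofReal ?_)
      have h6 : T ^ (-(1:ℝ)/4) ≤ T₀ ^ (-(1:ℝ)/4) := by
        rw [erpow T h0T, erpow T₀ hT₀]
        apply inv_anti₀ (by positivity)
        exact Real.rpow_le_rpow hT₀.le hT (by norm_num)
      calc c₀ * T ^ (-(1:ℝ)/4) ≤ c₀ * T₀ ^ (-(1:ℝ)/4) :=
            mul_le_mul_of_nonneg_left h6 hc₀.le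
        _ ≤ c₀ * T₀ ^ (-(1:ℝ)/4) + 1 := by linarith
end
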